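/- arXiv:1304.0027 — 5 statements merged into one kernel-verified Lean document; each statement's English description precedes it below -/
import Mathlib

section
/- Let N ≥ 3 be prime and k = (k₁,k₂) ∈ ℤ². Then V_k is invariant under the action of ℤ/N × ℤ/N on ℝ^(N×N) (i.e., (r,s)·x ∈ V_k for all (r,s) ∈ ℤ/N × ℤ/N and x ∈ V_k), and V_k is irreducible: the only linear subspaces of V_k invariant under the action of every element of ℤ/N × ℤ/N are {0} and V_k itself. -/
/-- The generating vector of `V_k`: `x_{α,β} = Re(z · exp(2πi(αk₁+βk₂)/N))`. -/
noncomputable def vkFun (N : ℕ) (k : ℤ × ℤ) (z : ℂ) : ZMod N × ZMod N → ℝ :=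
  fun p => (z * Complex.exp (2 * Real.pi * Complex.I *
    (((p.1.val : ℂ) * (k.1 : ℂ) + (p.2.val : ℂ) * (k.2 : ℂ)) / (N : ℂ)))).re

/-- The subspace `V_k ⊆ ℝ^{N×N}`, as a set. -/
def VkSet (N : ℕ) (k : ℤ × ℤ) : Set (ZMod N × ZMod N → ℝ) :=
  {x | ∃ z : ℂ, x = vkFun N k z}

/-- The action of `ℤ/N × ℤ/N` on `ℝ^{N×N}` by index translation:
`((r,s)·x)_{α,β} = x_{α+r,β+s}`. -/
def act (N : ℕ) (g : ZMod N × ZMod N) (x : ZMod N × ZMod N → ℝ) :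
    ZMod N × ZMod N → ℝ :=
  fun p => x (p.1 + g.1, p.2 + g.2)

/-! Writing `χ(α,β) = exp(2πi(αk₁+βk₂)/N)`, an additive character of `ℤ/N × ℤ/N`, we have
`V_k = {Re(z χ) : z ∈ ℂ}` and translation by `g` sends `Re(z χ)` to `Re(z χ(g) χ)`, which gives
invariance. For irreducibility take `Re(z χ) ≠ 0` in an invariant subspace. If `χ` is trivial, `V_k`
is the line of constant vectors. Otherwise `χ(g) ≠ 1` for some `g`; since `χ(g)` is an `N`-th
root of unity and `N` is odd, `χ(g)` is not real, so `z` and `z χ(g)` span `ℂ` over `ℝ`, and the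
subspace contains all of `V_k`. -/

open Complex ZMod

lemma ZMod.stdAddChar_im_ne_zero {N : ℕ} [NeZero N] (hN : Odd N) {j : ZMod N} (hj : j ≠ 0) :
    (stdAddChar j).im ≠ 0 := by
  intro him
  -- a real point of the unit circle squares to `1`, and `j ↦ j + j` is injective for odd `N`
  have hsq : stdAddChar (j + j) = stdAddChar (0 : ZMod N) := by
    rw [AddChar.map_add_eq_mul, AddChar.map_zero_eq_one]
    nth_rewrite 2 [← conj_eq_iff_im.mpr him]
    rw [mul_conj, stdAddChar_apply, Circle.normSq_coe, ofReal_one]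
  exact hj ((add_self_eq_zero_iff_eq_zero hN).mp (injective_stdAddChar hsq))

lemma Complex.exists_eq_ofReal_add_ofReal_mul {ω : ℂ} (hω : ω.im ≠ 0) (u : ℂ) :
    ∃ a b : ℝ, u = a + b * ω :=
  ⟨u.re - u.im * ω.re / ω.im, u.im / ω.im, by apply Complex.ext <;> simp <;> field_simp; ring⟩

section

variable {N : ℕ} [NeZero N] (k : ℤ × ℤ)

noncomputable def vkChar (g : ZMod N × ZMod N) : ℂ :=
  stdAddChar (g.1 * (k.1 : ZMod N) + g.2 * (k.2 : ZMod N))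

lemma vkChar_add (g h : ZMod N × ZMod N) : vkChar k (g + h) = vkChar k g * vkChar k h := by
  simp only [vkChar, ← AddChar.map_add_eq_mul, Prod.fst_add, Prod.snd_add]
  congr 1
  ring

lemma vkChar_im_ne_zero (hN : Odd N) {g : ZMod N × ZMod N} (hg : vkChar k g ≠ 1) :
    (vkChar k g).im ≠ 0 :=
  stdAddChar_im_ne_zero hN fun h => hg (by rw [vkChar, h, AddChar.map_zero_eq_one])

lemma vkFun_eq_re_mul (z : ℂ) : vkFun N k z = fun p => (z * vkChar k p).re := by
  funext p
  have hcast : p.1 * (k.1 : ZMod N) + p.2 * (k.2 : ZMod N) =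
      ((p.1.val * k.1 + p.2.val * k.2 : ℤ) : ZMod N) := by
    push_cast
    simp only [natCast_zmod_val]
  rw [vkFun, vkChar, hcast, stdAddChar_coe, mul_div_assoc]
  push_cast
  rfl

lemma vkFun_add (z w : ℂ) : vkFun N k (z + w) = vkFun N k z + vkFun N k w := by
  simp only [vkFun_eq_re_mul, add_mul, add_re]
  rfl

lemma vkFun_ofReal_mul (a : ℝ) (z : ℂ) : vkFun N k (a * z) = a • vkFun N k z := by
  simp only [vkFun_eq_re_mul, mul_assoc, re_ofReal_mul]
  rfl

lemma act_vkFun (g : ZMod N × ZMod N) (z : ℂ) :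
    act N g (vkFun N k z) = vkFun N k (z * vkChar k g) := by
  simp only [vkFun_eq_re_mul]
  funext p
  change (z * vkChar k (p + g)).re = _
  rw [vkChar_add, mul_comm (vkChar k p), mul_assoc]

lemma vkFun_eq_const_re (htriv : ∀ g : ZMod N × ZMod N, vkChar k g = (1 : ℂ)) (z : ℂ) :
    vkFun N k z = fun _ => z.re := by
  simp [vkFun_eq_re_mul, htriv]

lemma VkSet_subset_of_mem (hN : Odd N) {U : Submodule ℝ (ZMod N × ZMod N → ℝ)}
    (hU : (U : Set (ZMod N × ZMod N → ℝ)) ⊆ VkSet N k)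
    (hinv : ∀ g : ZMod N × ZMod N, ∀ x ∈ U, act N g x ∈ U)
    {x : ZMod N × ZMod N → ℝ} (hx : x ∈ U) (hx0 : x ≠ 0) :
    VkSet N k ⊆ U := by
  obtain ⟨z, rfl⟩ := hU hx
  rintro _ ⟨w, rfl⟩
  by_cases htriv : ∀ g : ZMod N × ZMod N, vkChar k g = (1 : ℂ)
  · rw [vkFun_eq_const_re k htriv] at hx hx0 ⊢
    have hz : z.re ≠ 0 := fun h => hx0 (by rw [h]; rfl)
    have hw : (fun _ => w.re : ZMod N × ZMod N → ℝ) = (w.re / z.re) • fun _ => z.re := by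
      funext; simp [hz]
    rw [hw]
    exact U.smul_mem _ hx
  · push Not at htriv
    obtain ⟨g, hg⟩ := htriv
    have hz : z ≠ 0 := by rintro rfl; exact hx0 (by simp [vkFun_eq_re_mul]; rfl)
    obtain ⟨a, b, hab⟩ := exists_eq_ofReal_add_ofReal_mul (vkChar_im_ne_zero k hN hg) (w / z)
    have hw : w = a * z + b * (z * vkChar k g) := by rw [← div_mul_cancel₀ w hz, hab]; ring
    rw [hw, vkFun_add, vkFun_ofReal_mul, vkFun_ofReal_mul, ← act_vkFun]
    exact U.add_mem (U.smul_mem a hx) (U.smul_mem b (hinv g _ hx))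

end

/-- `V_k` is invariant under the `ℤ/N × ℤ/N`-action, and irreducible: the only
invariant linear subspaces contained in `V_k` are `{0}` and `V_k` itself. -/
theorem stmt1 (N : ℕ) (hN : N.Prime) (h3 : 3 ≤ N) (k : ℤ × ℤ) :
    (∀ g : ZMod N × ZMod N, ∀ x ∈ VkSet N k, act N g x ∈ VkSet N k) ∧
    (∀ U : Submodule ℝ (ZMod N × ZMod N → ℝ),
      (U : Set (ZMod N × ZMod N → ℝ)) ⊆ VkSet N k →
      (∀ g : ZMod N × ZMod N, ∀ x ∈ U, act N g x ∈ U) →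
      ((U : Set (ZMod N × ZMod N → ℝ)) = {0} ∨
        (U : Set (ZMod N × ZMod N → ℝ)) = VkSet N k)) := by
  have : NeZero N := ⟨hN.ne_zero⟩
  have hodd : Odd N := hN.odd_of_ne_two (by omega)
  refine ⟨fun g x ⟨z, hx⟩ => ⟨_, hx ▸ act_vkFun k g z⟩, fun U hU hinv => ?_⟩
  by_cases h0 : ∀ x ∈ U, x = 0
  · exact Or.inl (Set.eq_singleton_iff_unique_mem.mpr ⟨U.zero_mem, h0⟩)
  · push Not at h0
    obtain ⟨x, hx, hx0⟩ := h0
    exact Or.inr (hU.antisymm (VkSet_subset_of_mem k hodd hU hinv hx hx0))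
end

section
/- Let N ≥ 3 be prime. Then ℝ^(N×N) is the internal direct sum of the subspaces V_k over k in the index set I: every x ∈ ℝ^(N×N) is a sum of elements of the V_k, k ∈ I, and this decomposition is direct (equivalently, the dimensions of the V_k, k ∈ I, add up to N² and their sum is all of ℝ^(N×N)). -/
/-- The index set `I`. -/
def idxI (N : ℕ) (k : ℤ × ℤ) : Prop :=
  k = (0, 0) ∨
  (k.1 = 0 ∧ 1 ≤ k.2 ∧ k.2 ≤ ((N : ℤ) - 1) / 2) ∨
  (k.2 = 0 ∧ 1 ≤ k.1 ∧ k.1 ≤ ((N : ℤ) - 1) / 2) ∨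
  (k.1 = k.2 ∧ 1 ≤ k.1 ∧ k.1 ≤ ((N : ℤ) - 1) / 2) ∨
  (1 ≤ k.2 ∧ k.2 < k.1 ∧ k.1 ≤ (N : ℤ) - 1)

/-!
For a character `ψ` of `(ℤ/N)²`, the functions `x ↦ Re (z ψ(x))`, `z ∈ ℂ`, form a real subspace,
and `V_k` is this subspace for the character `p ↦ exp (2πi (p₁k₁ + p₂k₂) / N)`. Replacing `ψ` by
`ψ⁻¹ = conj ψ` does not change the subspace. The characters are a basis of `ℂ^{(ℤ/N)²}`, so
taking real parts, these subspaces span `ℝ^{(ℤ/N)²}`; by orthogonality of characters, the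
subspaces of `ψ` and `φ` are orthogonal for the dot product unless `φ = ψ^{±1}`, so they are
independent. Finally, for odd `N` the index set `I` is a system of representatives of `(ℤ/N)²`
modulo `±1`.
-/

open Complex ComplexConjugate

theorem iSupIndep_of_dotProduct_eq_zero {R ι n : Type*} [CommRing R] [LinearOrder R]
    [IsStrictOrderedRing R] [Fintype n] {W : ι → Submodule R (n → R)}
    (h : Pairwise fun i j => ∀ x ∈ W i, ∀ y ∈ W j, x ⬝ᵥ y = 0) : iSupIndep W := by
  intro i
  rw [Submodule.disjoint_def]
  intro x hx hx'
  have hker : (⨆ j, ⨆ (_ : j ≠ i), W j) ≤ LinearMap.ker (dotProductBilin R R x) :=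
    iSup_le fun j => iSup_le fun hj y hy => h hj.symm x hx y hy
  exact dotProduct_self_eq_zero.1 (hker hx')

namespace AddChar

variable {G : Type*} [AddCommGroup G]

noncomputable def realWave (ψ : AddChar G ℂ) : ℂ →ₗ[ℝ] G → ℝ where
  toFun z x := (z * ψ x).re
  map_add' z w := by ext x; simp [add_mul]
  map_smul' c z := by ext x; simp [mul_assoc]

lemma realWave_apply (ψ : AddChar G ℂ) (z : ℂ) (x : G) : realWave ψ z x = (z * ψ x).re := rfl

lemma realWave_inv [Finite G] (ψ : AddChar G ℂ) :
    realWave ψ⁻¹ = realWave ψ ∘ₗ (conjAe : ℂ ≃ₐ[ℝ] ℂ).toLinearMap := by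
  ext z x
  rw [LinearMap.comp_apply, realWave_apply, realWave_apply, inv_apply, map_neg_eq_conj,
    ← conj_re, map_mul, conj_conj]
  rfl

lemma range_realWave_inv [Finite G] (ψ : AddChar G ℂ) :
    LinearMap.range (realWave ψ⁻¹) = LinearMap.range (realWave ψ) := by
  rw [realWave_inv, LinearMap.range_comp_of_range_eq_top]
  exact LinearMap.range_eq_top.2 conjAe.surjective

lemma realWave_dotProduct_realWave [Fintype G] {ψ φ : AddChar G ℂ} (h₁ : ψ ≠ φ) (h₂ : ψ ≠ φ⁻¹)
    (z w : ℂ) : realWave ψ z ⬝ᵥ realWave φ w = 0 := by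
  have hprod x : realWave ψ z x * realWave φ w x =
      ((z * w * (ψ * φ) x).re + (z * conj w * (ψ * φ⁻¹) x).re) / 2 := by
    simp only [realWave_apply, mul_apply, inv_apply, map_neg_eq_conj, mul_re, mul_im, conj_re,
      conj_im]
    ring
  have hsum₁ : ∑ x, (ψ * φ) x = 0 :=
    sum_eq_zero_iff_ne_zero.2 (by rwa [← one_eq_zero, ne_eq, ← eq_inv_iff_mul_eq_one])
  have hsum₂ : ∑ x, (ψ * φ⁻¹) x = 0 :=
    sum_eq_zero_iff_ne_zero.2 (by rwa [← one_eq_zero, ne_eq, mul_inv_eq_one])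
  simp only [dotProduct, hprod, ← Finset.sum_div, Finset.sum_add_distrib, ← re_sum,
    ← Finset.mul_sum, hsum₁, hsum₂]
  simp

theorem iSup_range_realWave_eq_top [Fintype G] {ι : Type*} {ψ : ι → AddChar G ℂ}
    (h : ∀ χ : AddChar G ℂ, ∃ i, χ = ψ i ∨ χ = (ψ i)⁻¹) :
    ⨆ i, LinearMap.range (realWave (ψ i)) = ⊤ := by
  refine eq_top_iff.2 fun f _ => ?_
  set c := (complexBasis G).repr (fun x => (f x : ℂ))
  have hf : f = ∑ χ, realWave χ (c χ) := by
    ext x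
    have hx := congrFun ((complexBasis G).sum_repr (fun x => (f x : ℂ))) x
    simp only [coe_complexBasis, Finset.sum_apply, Pi.smul_apply, smul_eq_mul] at hx
    rw [Finset.sum_apply, ← ofReal_re (f x), ← hx, re_sum]
    rfl
  rw [hf]
  refine Submodule.sum_mem _ fun χ _ => ?_
  obtain ⟨i, rfl | rfl⟩ := h χ
  · exact Submodule.mem_iSup_of_mem i ⟨_, rfl⟩
  · exact Submodule.mem_iSup_of_mem i (range_realWave_inv (ψ i) ▸ ⟨_, rfl⟩)

end AddChar

section Pairing

variable {N : ℕ} [NeZero N]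

noncomputable def pairingChar (k : ZMod N × ZMod N) : AddChar (ZMod N × ZMod N) ℂ where
  toFun p := ZMod.stdAddChar (p.1 * k.1 + p.2 * k.2)
  map_zero_eq_one' := by simp
  map_add_eq_mul' p q := by
    rw [← AddChar.map_add_eq_mul, Prod.fst_add, Prod.snd_add]
    ring_nf

lemma pairingChar_apply (k p : ZMod N × ZMod N) :
    pairingChar k p = ZMod.stdAddChar (p.1 * k.1 + p.2 * k.2) := rfl

lemma pairingChar_injective : Function.Injective (pairingChar (N := N)) := by
  intro k l h
  have h₁ := DFunLike.congr_fun h (1, 0)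
  have h₂ := DFunLike.congr_fun h (0, 1)
  simp only [pairingChar_apply, one_mul, zero_mul, add_zero, zero_add,
    ZMod.injective_stdAddChar.eq_iff] at h₁ h₂
  exact Prod.ext h₁ h₂

lemma pairingChar_bijective : Function.Bijective (pairingChar (N := N)) := by
  rw [Fintype.bijective_iff_injective_and_card, AddChar.card_eq]
  exact ⟨pairingChar_injective, rfl⟩

lemma pairingChar_neg (k : ZMod N × ZMod N) : pairingChar (-k) = (pairingChar k)⁻¹ := by
  ext p
  rw [AddChar.inv_apply, pairingChar_apply, pairingChar_apply]
  congr 1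
  simp only [Prod.fst_neg, Prod.snd_neg]
  ring

end Pairing

def castPair (N : ℕ) (k : ℤ × ℤ) : ZMod N × ZMod N := ((k.1 : ZMod N), (k.2 : ZMod N))

section IntegerFrequencies

variable {N : ℕ} [NeZero N]

lemma vkFun_eq_realWave (k : ℤ × ℤ) :
    vkFun N k = AddChar.realWave (pairingChar (castPair N k)) := by
  ext z p
  have hcast : p.1 * (castPair N k).1 + p.2 * (castPair N k).2 =
      (((p.1.val : ℤ) * k.1 + (p.2.val : ℤ) * k.2 : ℤ) : ZMod N) := by
    push_cast [castPair, ZMod.natCast_zmod_val]; rfl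
  rw [AddChar.realWave_apply, pairingChar_apply, hcast, ZMod.stdAddChar_coe, vkFun]
  push_cast
  ring_nf

lemma val_castPair_of_idxI {k : ℤ × ℤ} (hk : idxI N k) :
    ((castPair N k).1.val : ℤ) = k.1 ∧ ((castPair N k).2.val : ℤ) = k.2 := by
  have hN : 0 < (N : ℤ) := by exact_mod_cast Nat.pos_of_neZero N
  obtain ⟨k₁, k₂⟩ := k
  unfold idxI at hk
  simp only [castPair, ZMod.val_intCast, Prod.mk.injEq] at hk ⊢
  constructor <;> apply Int.emod_eq_of_lt <;> omega

lemma natCast_val_neg (x : ZMod N) :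
    ((-x).val : ℤ) = if x.val = 0 then 0 else (N : ℤ) - x.val := by
  rw [ZMod.neg_val]
  by_cases hx : x = 0
  · simp [hx]
  · rw [if_neg hx, if_neg ((ZMod.val_eq_zero x).not.2 hx), Nat.cast_sub x.val_lt.le]

lemma eq_of_castPair_eq_or_eq_neg {j l : ℤ × ℤ} (hj : idxI N j) (hl : idxI N l)
    (h : castPair N j = castPair N l ∨ castPair N j = -castPair N l) : j = l := by
  obtain ⟨hj₁, hj₂⟩ := val_castPair_of_idxI hj
  obtain ⟨hl₁, hl₂⟩ := val_castPair_of_idxI hl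
  rcases h with h | h
  · rw [h] at hj₁ hj₂
    exact Prod.ext (hj₁.symm.trans hl₁) (hj₂.symm.trans hl₂)
  · rw [h, Prod.fst_neg, natCast_val_neg] at hj₁
    rw [h, Prod.snd_neg, natCast_val_neg] at hj₂
    obtain ⟨j₁, j₂⟩ := j
    obtain ⟨l₁, l₂⟩ := l
    unfold idxI at hj hl
    simp only [Prod.mk.injEq] at hj hl hj₁ hj₂ hl₁ hl₂ ⊢
    split_ifs at hj₁ hj₂ <;> omega

lemma exists_idxI_castPair_eq (hodd : N % 2 = 1) (g : ZMod N × ZMod N) :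
    ∃ j, idxI N j ∧ (g = castPair N j ∨ g = -castPair N j) := by
  have hcast (x : ZMod N × ZMod N) : castPair N (x.1.val, x.2.val) = x := by
    simp only [castPair, Int.cast_natCast, ZMod.natCast_zmod_val]
  by_cases hg : idxI N (g.1.val, g.2.val)
  · exact ⟨_, hg, Or.inl (hcast g).symm⟩
  · refine ⟨((-g).1.val, (-g).2.val), ?_, Or.inr (by rw [hcast, neg_neg])⟩
    have h₁ := natCast_val_neg g.1
    have h₂ := natCast_val_neg g.2
    have hb₁ := g.1.val_lt
    have hb₂ := g.2.val_lt
    unfold idxI at hg ⊢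
    simp only [Prod.fst_neg, Prod.snd_neg, Prod.mk.injEq] at hg h₁ h₂ ⊢
    split_ifs at h₁ h₂ <;> omega

end IntegerFrequencies

/-- `ℝ^{N×N}` is the internal direct sum of the subspaces `V_k`, `k ∈ I`. -/
theorem stmt4 (N : ℕ) (hN : N.Prime) (h3 : 3 ≤ N) :
    ∃ W : {k : ℤ × ℤ // idxI N k} → Submodule ℝ (ZMod N × ZMod N → ℝ),
      (∀ k : {k : ℤ × ℤ // idxI N k},
        (W k : Set (ZMod N × ZMod N → ℝ)) = VkSet N k.1) ∧
      DirectSum.IsInternal W := by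
  have : NeZero N := ⟨hN.ne_zero⟩
  have hodd : N % 2 = 1 := Nat.odd_iff.1 (hN.odd_of_ne_two (by omega))
  refine ⟨fun k => LinearMap.range (AddChar.realWave (pairingChar (castPair N k.1))),
    fun k => ?_, DirectSum.isInternal_submodule_of_iSupIndep_of_iSup_eq_top ?_ ?_⟩
  · ext x
    simp only [SetLike.mem_coe, LinearMap.mem_range, VkSet, vkFun_eq_realWave, eq_comm,
      Set.mem_ofPred_eq]
  · refine iSupIndep_of_dotProduct_eq_zero fun i j hij => ?_
    rintro _ ⟨z, rfl⟩ _ ⟨w, rfl⟩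
    have hne (h : castPair N i.1 = castPair N j.1 ∨ castPair N i.1 = -castPair N j.1) : False :=
      hij (Subtype.ext (eq_of_castPair_eq_or_eq_neg i.2 j.2 h))
    exact AddChar.realWave_dotProduct_realWave (fun h => hne (.inl (pairingChar_injective h)))
      (fun h => hne (.inr (pairingChar_injective (h.trans (pairingChar_neg _).symm)))) z w
  · refine AddChar.iSup_range_realWave_eq_top fun χ => ?_
    obtain ⟨g, rfl⟩ := pairingChar_bijective.2 χ
    obtain ⟨j, hj, rfl | rfl⟩ := exists_idxI_castPair_eq hodd g
    · exact ⟨⟨j, hj⟩, .inl rfl⟩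
    · exact ⟨⟨j, hj⟩, .inr (pairingChar_neg _)⟩
end

section
/- Let N ≥ 3 be prime and (r,s) ∈ ℤ/N × ℤ/N with (r,s) ≠ (0,0). Then the fixed-point subspace Fix(⟨(r,s)⟩) = {x ∈ ℝ^(N×N) : (r,s)·x = x} equals the sum of the subspaces V_k over those k = (k₁,k₂) in the index set I with k₁r + k₂s ≡ 0 (mod N), and its dimension equals N. -/
open Complex Finset

variable {N : ℕ}


variable {N : ℕ}

/-- The basic character value. -/
noncomputable def eZ (N : ℕ) (a : ZMod N) : ℂ :=
  Complex.exp (2 * Real.pi * Complex.I * ((a.val : ℂ) / (N : ℂ)))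

lemma eZ_zero [NeZero N] : eZ N (0 : ZMod N) = 1 := by
  simp [eZ, ZMod.val_zero]

lemma eZ_ne_zero (a : ZMod N) : eZ N a ≠ 0 := Complex.exp_ne_zero _

lemma eZ_natCast_mod [NeZero N] (m : ℕ) :
    eZ N ((m : ZMod N)) = Complex.exp (2 * Real.pi * Complex.I * ((m : ℂ) / (N : ℂ))) := by
  have h : m = ((m : ZMod N)).val + N * (m / N) := by
    rw [ZMod.val_natCast]; exact (Nat.mod_add_div m N).symm
  have hN : (N : ℂ) ≠ 0 := Nat.cast_ne_zero.mpr (NeZero.ne N)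
  have hm : (m : ℂ) = (((m : ZMod N)).val : ℂ) + N * ((m / N : ℕ) : ℂ) := by
    exact_mod_cast congrArg (Nat.cast : ℕ → ℂ) h
  rw [eZ, show 2 * (Real.pi:ℂ) * Complex.I * ((m : ℂ) / N) =
      2 * (Real.pi:ℂ) * Complex.I * ((((m : ZMod N)).val : ℂ) / N)
      + ((m / N : ℕ) : ℂ) * (2 * Real.pi * Complex.I) by
    rw [hm]; field_simp]
  have h1 := Complex.exp_int_mul_two_pi_mul_I ((m / N : ℕ) : ℤ)
  rw [Int.cast_natCast] at h1
  rw [Complex.exp_add, h1, mul_one]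

lemma eZ_add [NeZero N] (a b : ZMod N) : eZ N (a + b) = eZ N a * eZ N b := by
  have h1 : eZ N (a + b) = eZ N (((a.val + b.val : ℕ) : ZMod N)) := by
    rw [Nat.cast_add, ZMod.natCast_zmod_val, ZMod.natCast_zmod_val]
  rw [h1, eZ_natCast_mod]
  rw [eZ, eZ, ← Complex.exp_add]
  congr 1
  push_cast
  ring

lemma eZ_eq_one_iff [NeZero N] (a : ZMod N) : eZ N a = 1 ↔ a = 0 := by
  constructor
  · intro h
    rw [eZ, Complex.exp_eq_one_iff] at h
    obtain ⟨n, hn⟩ := h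
    have hN : (N : ℂ) ≠ 0 := Nat.cast_ne_zero.mpr (NeZero.ne N)
    have hpi : (2 * (Real.pi:ℂ) * Complex.I) ≠ 0 := by
      simp [Real.pi_ne_zero, Complex.I_ne_zero, Complex.ofReal_ne_zero]
    have h2 : ((a.val : ℂ) / N) = n := by
      have := hn
      rw [mul_comm (n:ℂ)] at this
      exact mul_left_cancel₀ hpi this
    have h3 : (a.val : ℂ) = n * N := by
      rw [div_eq_iff hN] at h2; exact h2
    have h4 : (a.val : ℤ) = n * N := by
      apply Int.cast_injective (α := ℂ)
      rw [Int.cast_mul, Int.cast_natCast, Int.cast_natCast]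
      exact h3
    have h5 : (a.val : ℤ) < N := by exact_mod_cast a.val_lt
    have h6 : (0 : ℤ) ≤ (a.val : ℤ) := Int.natCast_nonneg _
    have hn0 : n = 0 := by
      rcases lt_trichotomy n 0 with h | h | h
      · nlinarith [show (0:ℤ) < (N:ℤ) from by exact_mod_cast (NeZero.pos N)]
      · exact h
      · nlinarith [show (0:ℤ) < (N:ℤ) from by exact_mod_cast (NeZero.pos N)]
    rw [hn0, zero_mul, Nat.cast_eq_zero] at h4
    exact (ZMod.val_eq_zero a).mp h4
  · rintro rfl; exact eZ_zero

lemma eZ_pow_nat [NeZero N] (a : ZMod N) (n : ℕ) : eZ N a ^ n = eZ N (a * n) := by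
  induction n with
  | zero => simp [eZ_zero]
  | succ m ih =>
    rw [pow_succ, ih, ← eZ_add]
    congr 1
    push_cast
    ring

lemma eZ_inv [NeZero N] (a : ZMod N) : (eZ N a)⁻¹ = eZ N (-a) := by
  have h : eZ N a * eZ N (-a) = 1 := by rw [← eZ_add]; simp [eZ_zero]
  exact inv_eq_of_mul_eq_one_right h

lemma eZ_zpow [NeZero N] (a : ZMod N) (k : ℤ) : eZ N a ^ k = eZ N (a * (k : ZMod N)) := by
  cases k with
  | ofNat n => simpa using eZ_pow_nat a n
  | negSucc n =>
    rw [zpow_negSucc, eZ_pow_nat, eZ_inv]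
    congr 1
    have : ((Int.negSucc n : ℤ) : ZMod N) = -((n+1 : ℕ) : ZMod N) := by
      rw [Int.negSucc_eq]; push_cast; ring
    rw [this]; push_cast; ring

lemma eZ_conj [NeZero N] (a : ZMod N) : (starRingEnd ℂ) (eZ N a) = eZ N (-a) := by
  rw [← eZ_inv, eZ, ← Complex.exp_conj, ← Complex.exp_neg]
  congr 1
  simp only [map_mul, map_div₀, map_ofNat, Complex.conj_ofReal, Complex.conj_I, map_natCast]
  ring

/-- The character of `(ZMod N)²`. -/
noncomputable def chiZ (N : ℕ) (w p : ZMod N × ZMod N) : ℂ :=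
  eZ N (p.1 * w.1 + p.2 * w.2)

lemma chiZ_add_right [NeZero N] (w p q : ZMod N × ZMod N) :
    chiZ N w (p + q) = chiZ N w p * chiZ N w q := by
  rw [chiZ, chiZ, chiZ, ← eZ_add]
  congr 1
  show (p.1 + q.1) * w.1 + (p.2 + q.2) * w.2 = _
  ring

lemma chiZ_conj [NeZero N] (w p : ZMod N × ZMod N) :
    (starRingEnd ℂ) (chiZ N w p) = chiZ N w (-p) := by
  rw [chiZ, chiZ, eZ_conj]
  congr 1
  show -(p.1 * w.1 + p.2 * w.2) = (-p).1 * w.1 + (-p).2 * w.2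
  simp only [Prod.fst_neg, Prod.snd_neg]; ring

lemma chiZ_neg_left [NeZero N] (w p : ZMod N × ZMod N) :
    chiZ N (-w) p = (starRingEnd ℂ) (chiZ N w p) := by
  rw [chiZ_conj, chiZ, chiZ]
  congr 1
  show p.1 * (-w).1 + p.2 * (-w).2 = (-p).1 * w.1 + (-p).2 * w.2
  simp only [Prod.fst_neg, Prod.snd_neg]; ring

lemma vkFun_eq_chi [NeZero N] (k : ℤ × ℤ) (z : ℂ) (p : ZMod N × ZMod N) :
    vkFun N k z p = (z * chiZ N (((k.1 : ZMod N)), ((k.2 : ZMod N))) p).re := by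
  have : chiZ N (((k.1 : ZMod N)), ((k.2 : ZMod N))) p
      = Complex.exp (2 * Real.pi * Complex.I *
        (((p.1.val : ℂ) * (k.1 : ℂ) + (p.2.val : ℂ) * (k.2 : ℂ)) / (N : ℂ))) := by
    rw [chiZ, eZ_add, ← eZ_zpow, ← eZ_zpow, eZ, eZ, ← Complex.exp_int_mul,
      ← Complex.exp_int_mul, ← Complex.exp_add]
    congr 1
    push_cast
    ring
  rw [vkFun, this]

lemma sum_zmod_eq_range [NeZero N] {M : Type*} [AddCommMonoid M] (f : ZMod N → M) :
    ∑ t : ZMod N, f t = ∑ j ∈ Finset.range N, f (j : ZMod N) := by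
  have hbij : Function.Bijective (fun i : Fin N => ((i : ℕ) : ZMod N)) := by
    rw [Fintype.bijective_iff_injective_and_card]
    refine ⟨fun i j hij => ?_, by simp [ZMod.card]⟩
    have : ((i:ℕ) : ZMod N).val = ((j:ℕ) : ZMod N).val := by
      simp only at hij; rw [hij]
    rwa [ZMod.val_natCast_of_lt i.2, ZMod.val_natCast_of_lt j.2, Fin.val_inj] at this
  rw [← Fin.sum_univ_eq_sum_range (fun j => f (j : ZMod N)) N]
  exact (Fintype.sum_bijective _ hbij _ _ (fun i => rfl)).symm

lemma sum_eZ_mul [NeZero N] (a : ZMod N) :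
    ∑ t : ZMod N, eZ N (a * t) = if a = 0 then (N : ℂ) else 0 := by
  split_ifs with h
  · subst h; simp [eZ_zero, ZMod.card]
  · have hroot : eZ N a ^ N = 1 := by
      rw [eZ_pow_nat, ZMod.natCast_self, mul_zero, eZ_zero]
    have hne1 : eZ N a ≠ 1 := fun hc => h ((eZ_eq_one_iff a).mp hc)
    have : ∑ t : ZMod N, eZ N (a * t) = ∑ j ∈ Finset.range N, eZ N a ^ j := by
      rw [sum_zmod_eq_range (fun t => eZ N (a * t))]
      exact Finset.sum_congr rfl (fun j _ => by rw [eZ_pow_nat])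
    rw [this, geom_sum_eq hne1, hroot, sub_self, zero_div]

lemma sum_chiZ [NeZero N] (d : ZMod N × ZMod N) :
    ∑ w : ZMod N × ZMod N, chiZ N w d = if d = 0 then ((N : ℂ))^2 else 0 := by
  have hsplit : ∀ w : ZMod N × ZMod N, chiZ N w d = eZ N (d.1 * w.1) * eZ N (d.2 * w.2) :=
    fun w => by rw [chiZ, eZ_add]
  rw [Fintype.sum_prod_type]
  calc ∑ w1 : ZMod N, ∑ w2 : ZMod N, chiZ N (w1, w2) d
      = (∑ w1 : ZMod N, eZ N (d.1 * w1)) * (∑ w2 : ZMod N, eZ N (d.2 * w2)) := by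
        rw [Finset.sum_mul_sum]
        exact Finset.sum_congr rfl fun w1 _ => Finset.sum_congr rfl fun w2 _ => hsplit (w1, w2)
    _ = _ := by
        rw [sum_eZ_mul, sum_eZ_mul]
        by_cases h1 : d.1 = 0 <;> by_cases h2 : d.2 = 0 <;>
          simp [h1, h2, Prod.ext_iff, sq]

lemma rep_exists (hN : N.Prime) (h3 : 3 ≤ N) (c : ZMod N × ZMod N) :
    ∃ k : ℤ × ℤ, idxI N k ∧
      (((k.1 : ZMod N), (k.2 : ZMod N)) = c ∨ ((k.1 : ZMod N), (k.2 : ZMod N)) = -c) := by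
  haveI : NeZero N := ⟨hN.ne_zero⟩
  obtain ⟨M, hM⟩ : ∃ M, N = 2 * M + 1 := by
    have hodd : Odd N := hN.odd_of_ne_two (by omega)
    obtain ⟨M, hM⟩ := hodd; exact ⟨M, by omega⟩
  have hhalf : ((N : ℤ) - 1) / 2 = (M : ℤ) := by omega
  set a := c.1 with ha
  set b := c.2 with hb
  have hav : ((a.val : ℤ) : ZMod N) = a := by push_cast [ZMod.natCast_zmod_val]; rfl
  have hbv : ((b.val : ℤ) : ZMod N) = b := by push_cast [ZMod.natCast_zmod_val]; rfl
  have haN : a.val < N := a.val_lt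
  have hbN : b.val < N := b.val_lt
  have hnegcast : ∀ v : ℕ, v ≤ N → (((N : ℤ) - v) : ZMod N) = -((v : ℕ) : ZMod N) := by
    intro v hv
    push_cast
    rw [ZMod.natCast_self]
    ring
  have hceq : c = (a, b) := rfl
  by_cases ha0 : a = 0 <;> by_cases hb0 : b = 0
  · exact ⟨(0, 0), Or.inl rfl, Or.inl (by simp [hceq, ha0, hb0])⟩
  · -- a = 0, b ≠ 0
    have hb1 : 1 ≤ b.val := Nat.one_le_iff_ne_zero.mpr (fun h => hb0 ((ZMod.val_eq_zero b).mp h))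
    by_cases hble : b.val ≤ M
    · refine ⟨(0, (b.val : ℤ)), Or.inr (Or.inl ⟨rfl, by show (1:ℤ) ≤ (b.val:ℤ); exact_mod_cast hb1, by omega⟩),
        Or.inl ?_⟩
      simp [hceq, ha0, hbv]
    · refine ⟨(0, (N : ℤ) - b.val), Or.inr (Or.inl ⟨rfl, by omega, by omega⟩), Or.inr ?_⟩
      have h2 : (((N : ℤ) - b.val) : ZMod N) = -b := by
        rw [hnegcast b.val hbN.le, ZMod.natCast_zmod_val]
      simp [hceq, ha0, Prod.ext_iff, h2]
  · -- b = 0, a ≠ 0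
    have ha1 : 1 ≤ a.val := Nat.one_le_iff_ne_zero.mpr (fun h => ha0 ((ZMod.val_eq_zero a).mp h))
    by_cases hale : a.val ≤ M
    · refine ⟨((a.val : ℤ), 0), Or.inr (Or.inr (Or.inl ⟨rfl, by show (1:ℤ) ≤ (a.val:ℤ); exact_mod_cast ha1, by omega⟩)),
        Or.inl ?_⟩
      simp [hceq, hb0, hav]
    · refine ⟨((N : ℤ) - a.val, 0), Or.inr (Or.inr (Or.inl ⟨rfl, by omega, by omega⟩)), Or.inr ?_⟩
      have h2 : (((N : ℤ) - a.val) : ZMod N) = -a := by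
        rw [hnegcast a.val haN.le, ZMod.natCast_zmod_val]
      simp [hceq, hb0, Prod.ext_iff, h2]
  · -- a ≠ 0, b ≠ 0
    have ha1 : 1 ≤ a.val := Nat.one_le_iff_ne_zero.mpr (fun h => ha0 ((ZMod.val_eq_zero a).mp h))
    have hb1 : 1 ≤ b.val := Nat.one_le_iff_ne_zero.mpr (fun h => hb0 ((ZMod.val_eq_zero b).mp h))
    by_cases hab : a = b
    · -- diagonal case
      have hv : a.val = b.val := by rw [hab]
      by_cases hale : a.val ≤ M
      · refine ⟨((a.val : ℤ), (a.val : ℤ)),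
          Or.inr (Or.inr (Or.inr (Or.inl ⟨rfl, by show (1:ℤ) ≤ (a.val:ℤ); exact_mod_cast ha1, by omega⟩))), Or.inl ?_⟩
        simp [hceq, Prod.ext_iff, hav, ← hab]
      · refine ⟨((N : ℤ) - a.val, (N : ℤ) - a.val),
          Or.inr (Or.inr (Or.inr (Or.inl ⟨rfl, by omega, by omega⟩))), Or.inr ?_⟩
        have h2 : (((N : ℤ) - a.val) : ZMod N) = -a := by
          rw [hnegcast a.val haN.le, ZMod.natCast_zmod_val]
        simp [hceq, Prod.ext_iff, ← hab, h2]
    · -- offdiagonal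
      have hvne : a.val ≠ b.val := fun h => hab (ZMod.val_injective _ h)
      by_cases hlt : b.val < a.val
      · refine ⟨((a.val : ℤ), (b.val : ℤ)),
          Or.inr (Or.inr (Or.inr (Or.inr ⟨by show (1:ℤ) ≤ (b.val:ℤ); exact_mod_cast hb1,
            by show ((b.val:ℕ):ℤ) < ((a.val:ℕ):ℤ); exact_mod_cast hlt,
            by omega⟩))),
          Or.inl ?_⟩
        simp [hceq, Prod.ext_iff, hav, hbv]
      · have hlt' : a.val < b.val := by omega
        refine ⟨((N : ℤ) - a.val, (N : ℤ) - b.val),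
          Or.inr (Or.inr (Or.inr (Or.inr ⟨by omega, by omega, by omega⟩))), Or.inr ?_⟩
        have h2 : (((N : ℤ) - a.val) : ZMod N) = -a := by
          rw [hnegcast a.val haN.le, ZMod.natCast_zmod_val]
        have h3 : (((N : ℤ) - b.val) : ZMod N) = -b := by
          rw [hnegcast b.val hbN.le, ZMod.natCast_zmod_val]
        simp [hceq, Prod.ext_iff, h2, h3]

lemma fix_mem_span (hN : N.Prime) (h3 : 3 ≤ N) (g : ZMod N × ZMod N)
    (x : ZMod N × ZMod N → ℝ) (hx : act N g x = x) :
    x ∈ Submodule.span ℝ (⋃ k ∈ {k : ℤ × ℤ | idxI N k ∧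
      (k.1 : ZMod N) * g.1 + (k.2 : ZMod N) * g.2 = 0}, VkSet N k) := by
  haveI : NeZero N := ⟨hN.ne_zero⟩
  have hfix : ∀ p : ZMod N × ZMod N, x (p + g) = x p := fun p => congrFun hx p
  set c : (ZMod N × ZMod N) → ℂ :=
    fun w => ∑ q : ZMod N × ZMod N, (x q : ℂ) * chiZ N w (-q) with hc
  -- Step A : vanishing of coefficients
  have stepA : ∀ w : ZMod N × ZMod N, w.1 * g.1 + w.2 * g.2 ≠ 0 → c w = 0 := by
    intro w hw
    have h1 : c w = chiZ N w (-g) * c w := by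
      have e1 : c w = ∑ q : ZMod N × ZMod N, (x (q + g) : ℂ) * chiZ N w (-(q + g)) := by
        rw [hc]
        exact (Fintype.sum_equiv (Equiv.addRight g)
          (fun q => (x (q + g) : ℂ) * chiZ N w (-(q + g)))
          (fun q => (x q : ℂ) * chiZ N w (-q)) (fun q => rfl)).symm
      have e2 : ∑ q : ZMod N × ZMod N, (x (q + g) : ℂ) * chiZ N w (-(q + g))
          = chiZ N w (-g) * c w := by
        rw [hc, Finset.mul_sum]
        refine Finset.sum_congr rfl fun q _ => ?_
        rw [hfix, show -(q + g) = -q + -g by ring, chiZ_add_right]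
        ring
      exact e1.trans e2
    have hne1 : chiZ N w (-g) ≠ 1 := by
      intro hcon
      rw [chiZ, eZ_eq_one_iff] at hcon
      apply hw
      have : (-g).1 * w.1 + (-g).2 * w.2 = -(w.1 * g.1 + w.2 * g.2) := by
        simp only [Prod.fst_neg, Prod.snd_neg]; ring
      rw [this] at hcon
      exact neg_eq_zero.mp hcon
    have h2 : (1 - chiZ N w (-g)) * c w = 0 := by linear_combination h1
    rcases mul_eq_zero.mp h2 with h | h
    · exact absurd (by linear_combination -h) hne1
    · exact h
  -- Step B : Fourier inversion
  have stepB : ∀ p : ZMod N × ZMod N,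
      ∑ w : ZMod N × ZMod N, c w * chiZ N w p = (N : ℂ)^2 * (x p : ℂ) := by
    intro p
    have e1 : ∀ w : ZMod N × ZMod N, c w * chiZ N w p
        = ∑ q : ZMod N × ZMod N, (x q : ℂ) * chiZ N w (p - q) := by
      intro w
      rw [hc, Finset.sum_mul]
      refine Finset.sum_congr rfl fun q _ => ?_
      rw [show p - q = -q + p by ring, chiZ_add_right]
      ring
    calc ∑ w : ZMod N × ZMod N, c w * chiZ N w p
        = ∑ w : ZMod N × ZMod N, ∑ q : ZMod N × ZMod N, (x q : ℂ) * chiZ N w (p - q) :=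
          Finset.sum_congr rfl fun w _ => e1 w
      _ = ∑ q : ZMod N × ZMod N, ∑ w : ZMod N × ZMod N, (x q : ℂ) * chiZ N w (p - q) :=
          Finset.sum_comm
      _ = ∑ q : ZMod N × ZMod N, (x q : ℂ) * (if p - q = 0 then ((N:ℂ))^2 else 0) := by
          refine Finset.sum_congr rfl fun q _ => ?_
          rw [← Finset.mul_sum, sum_chiZ]
      _ = (N : ℂ)^2 * (x p : ℂ) := by
          rw [Finset.sum_eq_single p]
          · simp [mul_comm]
          · intro q _ hq
            rw [if_neg (sub_ne_zero.mpr (Ne.symm hq)), mul_zero]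
          · intro h; exact absurd (Finset.mem_univ p) h
  -- Step C : pointwise expansion over the filtered set
  set T : Finset (ZMod N × ZMod N) :=
    Finset.univ.filter (fun w => w.1 * g.1 + w.2 * g.2 = 0) with hT
  have hN2 : ((N : ℂ))^2 ≠ 0 := by
    have : (N : ℂ) ≠ 0 := Nat.cast_ne_zero.mpr hN.ne_zero
    exact pow_ne_zero 2 this
  have stepC : ∀ p : ZMod N × ZMod N,
      x p = ∑ w ∈ T, ((c w / (N:ℂ)^2) * chiZ N w p).re := by
    intro p
    have h1 : (x p : ℂ) = ∑ w : ZMod N × ZMod N, (c w / (N:ℂ)^2) * chiZ N w p := by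
      rw [show ∑ w : ZMod N × ZMod N, (c w / (N:ℂ)^2) * chiZ N w p
          = (∑ w : ZMod N × ZMod N, c w * chiZ N w p) / (N:ℂ)^2 by
        rw [Finset.sum_div]; exact Finset.sum_congr rfl fun w _ => by ring]
      rw [stepB p, mul_comm, mul_div_assoc, div_self hN2, mul_one]
    have h2 : x p = ∑ w : ZMod N × ZMod N, ((c w / (N:ℂ)^2) * chiZ N w p).re := by
      rw [← Complex.re_sum, ← h1, Complex.ofReal_re]
    rw [h2]
    refine (Finset.sum_subset (Finset.subset_univ T) fun w _ hw => ?_).symm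
    have hw' : w.1 * g.1 + w.2 * g.2 ≠ 0 := by
      intro hcon
      exact hw (Finset.mem_filter.mpr ⟨Finset.mem_univ w, hcon⟩)
    rw [stepA w hw', zero_div, zero_mul, Complex.zero_re]
  -- Step D : conclude membership in the span
  have hxeq : x = ∑ w ∈ T, (fun p => ((c w / (N:ℂ)^2) * chiZ N w p).re) := by
    funext p
    rw [Finset.sum_apply]
    exact stepC p
  rw [hxeq]
  refine Submodule.sum_mem _ fun w hw => ?_
  have hw' : w.1 * g.1 + w.2 * g.2 = 0 := (Finset.mem_filter.mp hw).2
  obtain ⟨k, hkI, hkc⟩ := rep_exists hN h3 w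
  have hkcond : (k.1 : ZMod N) * g.1 + (k.2 : ZMod N) * g.2 = 0 := by
    rcases hkc with h | h
    · have h1 : (k.1 : ZMod N) = w.1 := congrArg Prod.fst h
      have h2 : (k.2 : ZMod N) = w.2 := congrArg Prod.snd h
      rw [h1, h2]; exact hw'
    · have h1 : (k.1 : ZMod N) = -w.1 := by
        have := congrArg Prod.fst h; simpa using this
      have h2 : (k.2 : ZMod N) = -w.2 := by
        have := congrArg Prod.snd h; simpa using this
      rw [h1, h2]
      rw [show -w.1 * g.1 + -w.2 * g.2 = -(w.1 * g.1 + w.2 * g.2) by ring, hw', neg_zero]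
  apply Submodule.subset_span
  refine Set.mem_biUnion (show k ∈ _ from ⟨hkI, hkcond⟩) ?_
  rcases hkc with h | h
  · exact ⟨c w / (N:ℂ)^2, by
      funext p
      rw [vkFun_eq_chi, h]⟩
  · refine ⟨(starRingEnd ℂ) (c w / (N:ℂ)^2), ?_⟩
    funext p
    rw [vkFun_eq_chi, h, chiZ_neg_left]
    rw [show (starRingEnd ℂ) (c w / (N:ℂ)^2) * (starRingEnd ℂ) (chiZ N w p)
        = (starRingEnd ℂ) ((c w / (N:ℂ)^2) * chiZ N w p) by rw [map_mul]]
    rw [Complex.conj_re]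

/-- The fixed-point subspace as a submodule. -/
def fixSub (N : ℕ) (g : ZMod N × ZMod N) : Submodule ℝ (ZMod N × ZMod N → ℝ) where
  carrier := {x | act N g x = x}
  add_mem' := by
    intro a b ha hb
    funext p
    show (a + b) (p.1 + g.1, p.2 + g.2) = (a + b) p
    simp only [Pi.add_apply]
    rw [show a (p.1 + g.1, p.2 + g.2) = a p from congrFun ha p,
      show b (p.1 + g.1, p.2 + g.2) = b p from congrFun hb p]
  zero_mem' := by funext p; rfl
  smul_mem' := by
    intro t a ha
    funext p
    show (t • a) (p.1 + g.1, p.2 + g.2) = (t • a) p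
    simp only [Pi.smul_apply]
    rw [show a (p.1 + g.1, p.2 + g.2) = a p from congrFun ha p]

lemma span_le_fix (hN : N.Prime) (g : ZMod N × ZMod N) :
    Submodule.span ℝ (⋃ k ∈ {k : ℤ × ℤ | idxI N k ∧
      (k.1 : ZMod N) * g.1 + (k.2 : ZMod N) * g.2 = 0}, VkSet N k) ≤ fixSub N g := by
  haveI : NeZero N := ⟨hN.ne_zero⟩
  rw [Submodule.span_le]
  rintro x hx
  simp only [Set.mem_iUnion] at hx
  obtain ⟨k, ⟨hkI, hkcond⟩, z, rfl⟩ := hx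
  show act N g (vkFun N k z) = vkFun N k z
  funext p
  show vkFun N k z (p.1 + g.1, p.2 + g.2) = vkFun N k z p
  rw [vkFun_eq_chi, vkFun_eq_chi]
  have : ((p.1 + g.1, p.2 + g.2) : ZMod N × ZMod N) = p + g := rfl
  rw [this, chiZ_add_right]
  have hg1 : chiZ N ((k.1 : ZMod N), (k.2 : ZMod N)) g = 1 := by
    rw [chiZ, show g.1 * ((k.1 : ZMod N), (k.2 : ZMod N)).1
        + g.2 * ((k.1 : ZMod N), (k.2 : ZMod N)).2
        = (k.1 : ZMod N) * g.1 + (k.2 : ZMod N) * g.2 by ring, hkcond, eZ_zero]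
  rw [hg1, mul_one]

lemma fix_iterate (g : ZMod N × ZMod N) (x : ZMod N × ZMod N → ℝ) (hx : act N g x = x)
    (p : ZMod N × ZMod N) (m : ZMod N) [NeZero N] :
    x (p.1 + m * g.1, p.2 + m * g.2) = x p := by
  have key : ∀ n : ℕ, x (p.1 + (n : ZMod N) * g.1, p.2 + (n : ZMod N) * g.2) = x p := by
    intro n
    induction n with
    | zero => simp
    | succ n ih =>
      have h1 : x ((p.1 + (n : ZMod N) * g.1) + g.1, (p.2 + (n : ZMod N) * g.2) + g.2)
          = x (p.1 + (n : ZMod N) * g.1, p.2 + (n : ZMod N) * g.2) :=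
        congrFun hx (p.1 + (n : ZMod N) * g.1, p.2 + (n : ZMod N) * g.2)
      have h2 : ((n + 1 : ℕ) : ZMod N) = (n : ZMod N) + 1 := by push_cast; ring
      rw [h2, show p.1 + ((n : ZMod N) + 1) * g.1 = (p.1 + (n : ZMod N) * g.1) + g.1 by ring,
        show p.2 + ((n : ZMod N) + 1) * g.2 = (p.2 + (n : ZMod N) * g.2) + g.2 by ring,
        h1, ih]
  have := key m.val
  rwa [ZMod.natCast_zmod_val] at this

lemma finrank_fix (hN : N.Prime) (g : ZMod N × ZMod N) (hg : g ≠ 0) :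
    Module.finrank ℝ (fixSub N g) = N := by
  haveI : Fact N.Prime := ⟨hN⟩
  haveI : NeZero N := ⟨hN.ne_zero⟩
  suffices h : ∃ _e : (ZMod N → ℝ) ≃ₗ[ℝ] fixSub N g, True by
    obtain ⟨e, -⟩ := h
    rw [← e.finrank_eq, Module.finrank_fintype_fun_eq_card, ZMod.card]
  by_cases hg1 : g.1 = 0
  · -- case g.1 = 0, hence g.2 ≠ 0
    have hg2 : g.2 ≠ 0 := by
      intro h2
      exact hg (Prod.ext_iff.mpr ⟨hg1, h2⟩)
    have hmem : ∀ f : ZMod N → ℝ, (fun p : ZMod N × ZMod N => f p.1) ∈ fixSub N g := by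
      intro f
      show act N g _ = _
      funext p
      show f (p.1 + g.1) = f p.1
      rw [hg1, add_zero]
    refine ⟨LinearEquiv.ofBijective
      { toFun := fun f => ⟨fun p => f p.1, hmem f⟩
        map_add' := fun f1 f2 => rfl
        map_smul' := fun r f => rfl } ⟨?_, ?_⟩, trivial⟩
    · intro f1 f2 h
      funext u
      exact congrFun (congrArg Subtype.val h) (u, 0)
    · rintro ⟨x, hx⟩
      refine ⟨fun u => x (u, 0), Subtype.ext ?_⟩
      funext p
      show x (p.1, 0) = x p
      have h0 := fix_iterate g x hx p (-(p.2 * g.2⁻¹))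
      have hc1 : p.1 + -(p.2 * g.2⁻¹) * g.1 = p.1 := by rw [hg1, mul_zero, add_zero]
      have hc2 : p.2 + -(p.2 * g.2⁻¹) * g.2 = 0 := by
        rw [neg_mul, mul_assoc, inv_mul_cancel₀ hg2, mul_one]; ring
      rw [hc1, hc2] at h0
      exact h0
  · -- case g.1 ≠ 0
    set t := g.1⁻¹ * g.2 with ht
    have hmem : ∀ f : ZMod N → ℝ,
        (fun p : ZMod N × ZMod N => f (p.2 - p.1 * t)) ∈ fixSub N g := by
      intro f
      show act N g _ = _
      funext p
      show f (p.2 + g.2 - (p.1 + g.1) * t) = f (p.2 - p.1 * t)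
      congr 1
      have h1 : g.1 * t = g.2 := by rw [ht, ← mul_assoc, mul_inv_cancel₀ hg1, one_mul]
      rw [add_mul, h1]
      ring
    refine ⟨LinearEquiv.ofBijective
      { toFun := fun f => ⟨fun p => f (p.2 - p.1 * t), hmem f⟩
        map_add' := fun f1 f2 => rfl
        map_smul' := fun r f => rfl } ⟨?_, ?_⟩, trivial⟩
    · intro f1 f2 h
      funext u
      have := congrFun (congrArg Subtype.val h) (0, u)
      simpa using this
    · rintro ⟨x, hx⟩
      refine ⟨fun u => x (0, u), Subtype.ext ?_⟩
      funext p
      show x (0, p.2 - p.1 * t) = x p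
      have h0 := fix_iterate g x hx p (-(p.1 * g.1⁻¹))
      have hc1 : p.1 + -(p.1 * g.1⁻¹) * g.1 = 0 := by
        rw [neg_mul, mul_assoc, inv_mul_cancel₀ hg1, mul_one]; ring
      have hc2 : p.2 + -(p.1 * g.1⁻¹) * g.2 = p.2 - p.1 * t := by
        rw [ht]; ring
      rw [hc1, hc2] at h0
      exact h0

/-- For `(r,s) ≠ (0,0)`, the fixed-point subspace of `⟨(r,s)⟩` equals the sum
of the `V_k` over `k ∈ I` with `k₁r + k₂s ≡ 0 (mod N)`, and has dimension `N`. -/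
theorem stmt6 (N : ℕ) (hN : N.Prime) (h3 : 3 ≤ N)
    (g : ZMod N × ZMod N) (hg : g ≠ 0) :
    {x : ZMod N × ZMod N → ℝ | act N g x = x} =
      ↑(Submodule.span ℝ (⋃ k ∈ {k : ℤ × ℤ | idxI N k ∧
        (k.1 : ZMod N) * g.1 + (k.2 : ZMod N) * g.2 = 0}, VkSet N k)) ∧
    Module.finrank ℝ (Submodule.span ℝ (⋃ k ∈ {k : ℤ × ℤ | idxI N k ∧
        (k.1 : ZMod N) * g.1 + (k.2 : ZMod N) * g.2 = 0}, VkSet N k)) = N := by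
  have heq : fixSub N g = Submodule.span ℝ (⋃ k ∈ {k : ℤ × ℤ | idxI N k ∧
      (k.1 : ZMod N) * g.1 + (k.2 : ZMod N) * g.2 = 0}, VkSet N k) :=
    le_antisymm (fun x hx => fix_mem_span hN h3 g x hx) (span_le_fix hN g)
  constructor
  · rw [← heq]
    rfl
  · rw [← heq]
    exact finrank_fix hN g hg
end

section
/- Let N ≥ 3 be prime, (r,s) ∈ ℤ/N × ℤ/N with (r,s) ≠ (0,0), and k = (k₁,k₂) ∈ ℤ² with (k₁,k₂) ≢ (0,0) (mod N). If rk₁ + sk₂ ≡ 0 (mod N), then (r,s)·x = x for every x ∈ V_k; if rk₁ + sk₂ ≢ 0 (mod N), then the only x ∈ V_k with (r,s)·x = x is x = 0. -/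
noncomputable def myZeta (N : ℕ) : ℂ := Complex.exp (2 * Real.pi * Complex.I / N)

lemma myZeta_ne_zero (N : ℕ) : myZeta N ≠ 0 := Complex.exp_ne_zero _

lemma vk_eq (N : ℕ) (k : ℤ × ℤ) (z : ℂ) (p : ZMod N × ZMod N) :
    vkFun N k z p = (z * myZeta N ^ ((p.1.val : ℤ) * k.1 + (p.2.val : ℤ) * k.2)).re := by
  unfold vkFun myZeta
  rw [← Complex.exp_int_mul]
  congr 2
  push_cast
  ring

lemma myZeta_zpow_congr (N : ℕ) (hN : N ≠ 0) {m m' : ℤ}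
    (h : (m : ZMod N) = (m' : ZMod N)) : myZeta N ^ m = myZeta N ^ m' := by
  have hdvd : (N : ℤ) ∣ m - m' := by
    rwa [← ZMod.intCast_zmod_eq_zero_iff_dvd, Int.cast_sub, sub_eq_zero]
  have h1 : myZeta N ^ (m - m') = 1 :=
    ((Complex.isPrimitiveRoot_exp N hN).zpow_eq_one_iff_dvd _).2 hdvd
  calc myZeta N ^ m = myZeta N ^ (m - m') * myZeta N ^ m' := by
        rw [← zpow_add₀ (myZeta_ne_zero N)]; group
    _ = myZeta N ^ m' := by rw [h1, one_mul]

lemma act_vk (N : ℕ) (hN : N ≠ 0) (g : ZMod N × ZMod N) (k : ℤ × ℤ) (z : ℂ) :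
    act N g (vkFun N k z) =
      vkFun N k (z * myZeta N ^ ((g.1.val : ℤ) * k.1 + (g.2.val : ℤ) * k.2)) := by
  haveI : NeZero N := ⟨hN⟩
  funext p
  show vkFun N k z (p.1 + g.1, p.2 + g.2) = _
  rw [vk_eq, vk_eq, mul_assoc, ← zpow_add₀ (myZeta_ne_zero N)]
  congr 2
  apply myZeta_zpow_congr N hN
  push_cast [ZMod.natCast_val, ZMod.cast_id]
  ring

lemma vk_inj (N : ℕ) (hN : N.Prime) (h3 : 3 ≤ N) (k : ℤ × ℤ)
    (hk : ¬ ((k.1 : ZMod N) = 0 ∧ (k.2 : ZMod N) = 0)) (w : ℂ)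
    (h : ∀ p : ZMod N × ZMod N,
      (w * myZeta N ^ ((p.1.val : ℤ) * k.1 + (p.2.val : ℤ) * k.2)).re = 0) :
    w = 0 := by
  haveI : NeZero N := ⟨hN.ne_zero⟩
  have h00 := h (0, 0)
  simp [ZMod.val_zero] at h00
  -- find p with exponent ≡ 1 mod N
  have hone : ∃ p : ZMod N × ZMod N,
      (((p.1.val : ℤ) * k.1 + (p.2.val : ℤ) * k.2 : ℤ) : ZMod N) = 1 := by
    haveI : Fact N.Prime := ⟨hN⟩
    rcases not_and_or.1 hk with h1 | h2
    · refine ⟨(((k.1 : ZMod N)⁻¹), 0), ?_⟩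
      push_cast [ZMod.natCast_val, ZMod.cast_id]
      simp [inv_mul_cancel₀ h1]
    · refine ⟨(0, ((k.2 : ZMod N)⁻¹)), ?_⟩
      push_cast [ZMod.natCast_val, ZMod.cast_id]
      simp [inv_mul_cancel₀ h2]
  obtain ⟨p, hp⟩ := hone
  have h1 := h p
  have : myZeta N ^ ((p.1.val : ℤ) * k.1 + (p.2.val : ℤ) * k.2) = myZeta N ^ (1 : ℤ) := by
    apply myZeta_zpow_congr N hN.ne_zero
    simpa using hp
  rw [this, zpow_one] at h1
  -- myZeta N = exp((2π/N) * I)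
  have hz : myZeta N = Complex.exp (((2 * Real.pi / N : ℝ) : ℂ) * Complex.I) := by
    unfold myZeta; congr 1; push_cast; ring
  have hre : (myZeta N).re = Real.cos (2 * Real.pi / N) := by
    rw [hz, Complex.exp_ofReal_mul_I_re]
  have him : (myZeta N).im = Real.sin (2 * Real.pi / N) := by
    rw [hz, Complex.exp_ofReal_mul_I_im]
  have hNpos : (0 : ℝ) < N := by positivity
  have hsin : Real.sin (2 * Real.pi / N) > 0 := by
    apply Real.sin_pos_of_pos_of_lt_pi
    · positivity
    · rw [div_lt_iff₀ hNpos]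
      have : (3 : ℝ) ≤ N := by exact_mod_cast h3
      nlinarith [Real.pi_pos]
  rw [Complex.mul_re, hre, him, h00] at h1
  have hwim : w.im = 0 := by
    have := h1
    nlinarith
  exact Complex.ext h00 hwim

/-- For `(r,s) ≠ (0,0)` and `k ≢ (0,0) (mod N)`: if `rk₁ + sk₂ ≡ 0 (mod N)` then
`(r,s)` fixes every element of `V_k`; otherwise the only fixed element of `V_k`
is `0`. -/
theorem stmt7 (N : ℕ) (hN : N.Prime) (h3 : 3 ≤ N)
    (g : ZMod N × ZMod N) (hg : g ≠ 0) (k : ℤ × ℤ)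
    (hk : ¬ ((k.1 : ZMod N) = 0 ∧ (k.2 : ZMod N) = 0)) :
    (g.1 * (k.1 : ZMod N) + g.2 * (k.2 : ZMod N) = 0 →
      ∀ x ∈ VkSet N k, act N g x = x) ∧
    (g.1 * (k.1 : ZMod N) + g.2 * (k.2 : ZMod N) ≠ 0 →
      ∀ x ∈ VkSet N k, act N g x = x → x = 0) := by
  haveI : NeZero N := ⟨hN.ne_zero⟩
  have hcast : (((g.1.val : ℤ) * k.1 + (g.2.val : ℤ) * k.2 : ℤ) : ZMod N)
      = g.1 * (k.1 : ZMod N) + g.2 * (k.2 : ZMod N) := by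
    push_cast [ZMod.natCast_val, ZMod.cast_id]
    ring
  constructor
  · intro h0 x hx
    obtain ⟨z, rfl⟩ := hx
    rw [act_vk N hN.ne_zero]
    have : myZeta N ^ ((g.1.val : ℤ) * k.1 + (g.2.val : ℤ) * k.2) = myZeta N ^ (0 : ℤ) := by
      apply myZeta_zpow_congr N hN.ne_zero
      simp [hcast, h0]
    rw [this, zpow_zero, mul_one]
  · intro h1 x hx hfix
    obtain ⟨z, rfl⟩ := hx
    rw [act_vk N hN.ne_zero] at hfix
    set ω := myZeta N ^ ((g.1.val : ℤ) * k.1 + (g.2.val : ℤ) * k.2) with hω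
    have hkey : ∀ p : ZMod N × ZMod N,
        ((z * (ω - 1)) * myZeta N ^ ((p.1.val : ℤ) * k.1 + (p.2.val : ℤ) * k.2)).re = 0 := by
      intro p
      have := congrFun hfix p
      rw [vk_eq, vk_eq] at this
      have : ((z * ω) * myZeta N ^ ((p.1.val : ℤ) * k.1 + (p.2.val : ℤ) * k.2)).re
          - (z * myZeta N ^ ((p.1.val : ℤ) * k.1 + (p.2.val : ℤ) * k.2)).re = 0 := by
        rw [this]; ring
      rw [← Complex.sub_re] at this
      convert this using 2
      ring
    have hw : z * (ω - 1) = 0 := vk_inj N hN h3 k hk _ hkey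
    have hω1 : ω ≠ 1 := by
      intro hcontra
      have hdvd : (N : ℤ) ∣ (g.1.val : ℤ) * k.1 + (g.2.val : ℤ) * k.2 :=
        ((Complex.isPrimitiveRoot_exp N hN.ne_zero).zpow_eq_one_iff_dvd _).1 hcontra
      have : (((g.1.val : ℤ) * k.1 + (g.2.val : ℤ) * k.2 : ℤ) : ZMod N) = 0 :=
        (ZMod.intCast_zmod_eq_zero_iff_dvd _ _).2 hdvd
      rw [hcast] at this
      exact h1 this
    have hz : z = 0 := by
      rcases mul_eq_zero.1 hw with h | h
      · exact h
      · exact absurd (sub_eq_zero.1 h) hω1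
    funext p
    rw [vk_eq, hz]
    simp
end

section
/- Let N ≥ 3 be an odd integer, γ > 0, δ < 0 real, θ_N = (N−1)π/N, and a* = γ(1 − cos θ_N). Then for all integers r, s: −a* + γ(1 − cos(2πr/N)) + δ(1 − cos(2πs/N)) ≤ 0, with equality if and only if s ≡ 0 (mod N) and r ≡ (N−1)/2 or r ≡ (N+1)/2 (mod N). -/
open Real

/-- Sign and vanishing of `sin(πj/N) sin(π(j+1)/N)`. -/
lemma aux_sign (N : ℕ) (hN : 0 < N) (j : ℤ) :
    0 ≤ Real.sin (Real.pi * (j : ℝ) / N) * Real.sin (Real.pi * ((j : ℝ) + 1) / N) ∧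
    (Real.sin (Real.pi * (j : ℝ) / N) * Real.sin (Real.pi * ((j : ℝ) + 1) / N) = 0 ↔
      ((N : ℤ) ∣ j ∨ (N : ℤ) ∣ (j + 1))) := by
  have hNZ : (0 : ℤ) < (N : ℤ) := by exact_mod_cast hN
  have hNR : (0 : ℝ) < (N : ℝ) := by exact_mod_cast hN
  have hπ := Real.pi_pos
  set t : ℤ := j % (N : ℤ) with htdef
  set q : ℤ := j / (N : ℤ) with hqdef
  have ht0 : 0 ≤ t := Int.emod_nonneg j (by omega)
  have htN : t < (N : ℤ) := Int.emod_lt_of_pos j hNZ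
  have hj : j = (N : ℤ) * q + t := (Int.mul_ediv_add_emod j N).symm
  have htR0 : (0 : ℝ) ≤ (t : ℝ) := by exact_mod_cast ht0
  have htRN : (t : ℝ) < (N : ℝ) := by exact_mod_cast htN
  have e1 : Real.pi * (j : ℝ) / N = Real.pi * (t : ℝ) / N + q * Real.pi := by
    have : (j : ℝ) = (N : ℝ) * (q : ℝ) + (t : ℝ) := by exact_mod_cast congrArg (Int.cast : ℤ → ℝ) hj
    rw [this]; field_simp; ring
  have h1 : Real.sin (Real.pi * (j : ℝ) / N) = (-1) ^ q * Real.sin (Real.pi * (t : ℝ) / N) := by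
    rw [e1, Real.sin_add_int_mul_pi]
  by_cases hcase : t = (N : ℤ) - 1
  · -- j + 1 is a multiple of N
    have hdvd : (N : ℤ) ∣ (j + 1) := ⟨q + 1, by rw [hj, hcase]; ring⟩
    have e2 : Real.pi * ((j : ℝ) + 1) / N = ((q + 1 : ℤ) : ℝ) * Real.pi := by
      have hj1 : ((j : ℝ) + 1) = (N : ℝ) * ((q : ℝ) + 1) := by
        have : j + 1 = (N : ℤ) * (q + 1) := by rw [hj, hcase]; ring
        exact_mod_cast congrArg (Int.cast : ℤ → ℝ) this
      rw [hj1]; push_cast; field_simp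
    have h2 : Real.sin (Real.pi * ((j : ℝ) + 1) / N) = 0 := by
      rw [e2]; exact Real.sin_int_mul_pi _
    constructor
    · rw [h2]; simp
    · constructor
      · intro _; exact Or.inr hdvd
      · intro _; rw [h2]; ring
  · -- t + 1 < N
    have ht1N : t + 1 < (N : ℤ) := by omega
    have ht1R : ((t : ℝ) + 1) < (N : ℝ) := by exact_mod_cast ht1N
    have e2 : Real.pi * ((j : ℝ) + 1) / N = Real.pi * ((t : ℝ) + 1) / N + q * Real.pi := by
      have : (j : ℝ) = (N : ℝ) * (q : ℝ) + (t : ℝ) := by exact_mod_cast congrArg (Int.cast : ℤ → ℝ) hj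
      rw [this]; field_simp; ring
    have h2 : Real.sin (Real.pi * ((j : ℝ) + 1) / N)
        = (-1) ^ q * Real.sin (Real.pi * ((t : ℝ) + 1) / N) := by
      rw [e2, Real.sin_add_int_mul_pi]
    have hsq : ((-1 : ℝ) ^ q) * ((-1 : ℝ) ^ q) = 1 := by
      rw [← zpow_add₀ (by norm_num : (-1 : ℝ) ≠ 0)]
      exact Even.neg_one_zpow ⟨q, rfl⟩
    have hprod : Real.sin (Real.pi * (j : ℝ) / N) * Real.sin (Real.pi * ((j : ℝ) + 1) / N)
        = Real.sin (Real.pi * (t : ℝ) / N) * Real.sin (Real.pi * ((t : ℝ) + 1) / N) := by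
      rw [h1, h2]; rw [show ((-1:ℝ)^q * Real.sin (Real.pi * (t : ℝ) / N)) *
        ((-1:ℝ)^q * Real.sin (Real.pi * ((t : ℝ) + 1) / N)) =
        (((-1:ℝ)^q) * ((-1:ℝ)^q)) * (Real.sin (Real.pi * (t : ℝ) / N) *
          Real.sin (Real.pi * ((t : ℝ) + 1) / N)) from by ring, hsq, one_mul]
    have hs1 : 0 ≤ Real.sin (Real.pi * (t : ℝ) / N) := by
      apply Real.sin_nonneg_of_nonneg_of_le_pi
      · positivity
      · rw [div_le_iff₀ hNR]; nlinarith
    have hs2 : 0 < Real.sin (Real.pi * ((t : ℝ) + 1) / N) := by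
      apply Real.sin_pos_of_pos_of_lt_pi
      · positivity
      · rw [div_lt_iff₀ hNR]; nlinarith
    constructor
    · rw [hprod]; exact mul_nonneg hs1 hs2.le
    · rw [hprod]
      constructor
      · intro h0
        have hs10 : Real.sin (Real.pi * (t : ℝ) / N) = 0 := by
          rcases mul_eq_zero.mp h0 with h | h
          · exact h
          · exact absurd h hs2.ne'
        have ht0' : t = 0 := by
          by_contra htne
          have htpos : 0 < t := lt_of_le_of_ne ht0 (Ne.symm htne)
          have : 0 < Real.sin (Real.pi * (t : ℝ) / N) := by
            apply Real.sin_pos_of_pos_of_lt_pi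
            · have : (0:ℝ) < (t:ℝ) := by exact_mod_cast htpos
              positivity
            · rw [div_lt_iff₀ hNR]; nlinarith
          linarith [this, hs10.le]
        left
        exact Int.dvd_of_emod_eq_zero (by rw [← htdef, ht0'])
      · rintro (h | h)
        · have : t = 0 := by
            rw [htdef]; exact Int.emod_eq_zero_of_dvd h
          rw [this]; push_cast; simp
        · exfalso
          have hpos : 0 < t + 1 := by omega
          have : t + 1 = (j + 1) - (N:ℤ) * q := by omega
          have hdvd' : (N : ℤ) ∣ (t + 1) := by
            rw [this]; exact dvd_sub h ⟨q, rfl⟩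
          have := Int.le_of_dvd hpos hdvd'
          omega

/-- The key trigonometric identity. -/
lemma aux_id (N k : ℕ) (hN : 0 < N) (hk : N = 2 * k + 1) (r j : ℤ)
    (hj : j = r - ((k : ℤ) + 1)) :
    Real.cos (2 * Real.pi * (r : ℝ) / N) - Real.cos (((N : ℝ) - 1) * Real.pi / N)
      = 2 * (Real.sin (Real.pi * (j : ℝ) / N) * Real.sin (Real.pi * ((j : ℝ) + 1) / N)) := by
  have hNR : (0 : ℝ) < (N : ℝ) := by exact_mod_cast hN
  have hNR' : (N : ℝ) = 2 * (k : ℝ) + 1 := by exact_mod_cast congrArg (Nat.cast : ℕ → ℝ) hk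
  have hjR : (j : ℝ) = (r : ℝ) - ((k : ℝ) + 1) := by exact_mod_cast congrArg (Int.cast : ℤ → ℝ) hj
  rw [Real.cos_sub_cos]
  have e1 : (2 * Real.pi * (r : ℝ) / N + ((N : ℝ) - 1) * Real.pi / N) / 2
      = Real.pi * (j : ℝ) / N + Real.pi := by
    rw [hjR]; field_simp; rw [hNR']; ring
  have e2 : (2 * Real.pi * (r : ℝ) / N - ((N : ℝ) - 1) * Real.pi / N) / 2
      = Real.pi * ((j : ℝ) + 1) / N := by
    rw [hjR]; field_simp; rw [hNR']; ring
  rw [e1, e2, Real.sin_add_pi]; ring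

/-- `cos(2πs/N) = 1` iff `N ∣ s`. -/
lemma aux_cos_one (N : ℕ) (hN : 0 < N) (s : ℤ) :
    Real.cos (2 * Real.pi * (s : ℝ) / N) = 1 ↔ (N : ℤ) ∣ s := by
  have hNR : (0 : ℝ) < (N : ℝ) := by exact_mod_cast hN
  have hπ : Real.pi ≠ 0 := Real.pi_ne_zero
  rw [Real.cos_eq_one_iff]
  constructor
  · rintro ⟨n, hn⟩
    refine ⟨n, ?_⟩
    have h1 : (n : ℝ) * (2 * Real.pi) * N = 2 * Real.pi * (s : ℝ) := by
      rw [hn]; field_simp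
    have h2 : (2 * Real.pi) * ((n : ℝ) * N - s) = 0 := by linear_combination h1
    have h3 : (n : ℝ) * N - s = 0 := by
      rcases mul_eq_zero.mp h2 with h | h
      · exact absurd h (by positivity)
      · exact h
    have : (s : ℝ) = (N : ℝ) * (n : ℝ) := by linarith
    exact_mod_cast this
  · rintro ⟨c, rfl⟩
    refine ⟨c, ?_⟩
    push_cast
    field_simp

/-- For `N ≥ 3` odd, `γ > 0`, `δ < 0`, `θ_N = (N−1)π/N` and
`a* = γ(1 − cos θ_N)`: for all integers `r, s`,
`−a* + γ(1 − cos(2πr/N)) + δ(1 − cos(2πs/N)) ≤ 0`, with equality iff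
`s ≡ 0 (mod N)` and `r ≡ (N−1)/2` or `r ≡ (N+1)/2 (mod N)`. -/
theorem stmt19 (N : ℕ) (h3 : 3 ≤ N) (hodd : Odd N)
    (γ δ : ℝ) (hγ : 0 < γ) (hδ : δ < 0) :
    let θ : ℝ := ((N : ℝ) - 1) * Real.pi / N
    let aStar : ℝ := γ * (1 - Real.cos θ)
    ∀ r s : ℤ,
      (-aStar + γ * (1 - Real.cos (2 * Real.pi * (r : ℝ) / N))
        + δ * (1 - Real.cos (2 * Real.pi * (s : ℝ) / N)) ≤ 0) ∧
      (-aStar + γ * (1 - Real.cos (2 * Real.pi * (r : ℝ) / N))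
        + δ * (1 - Real.cos (2 * Real.pi * (s : ℝ) / N)) = 0 ↔
        (s ≡ 0 [ZMOD (N : ℤ)] ∧
          (r ≡ ((N : ℤ) - 1) / 2 [ZMOD (N : ℤ)] ∨
           r ≡ ((N : ℤ) + 1) / 2 [ZMOD (N : ℤ)]))) := by
  obtain ⟨k, hk⟩ := hodd
  have hN : 0 < N := by omega
  have hNZ : ((N : ℤ)) = 2 * (k : ℤ) + 1 := by exact_mod_cast hk
  intro θ aStar r s
  set j : ℤ := r - ((k : ℤ) + 1) with hj
  have hid := aux_id N k hN hk r j hj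
  obtain ⟨hSnn, hSiff⟩ := aux_sign N hN j
  set S : ℝ := Real.sin (Real.pi * (j : ℝ) / N) * Real.sin (Real.pi * ((j : ℝ) + 1) / N)
    with hSdef
  have hcos1 := Real.cos_le_one (2 * Real.pi * (s : ℝ) / N)
  have hE : -aStar + γ * (1 - Real.cos (2 * Real.pi * (r : ℝ) / N))
      + δ * (1 - Real.cos (2 * Real.pi * (s : ℝ) / N))
      = -(γ * (2 * S)) + δ * (1 - Real.cos (2 * Real.pi * (s : ℝ) / N)) := by
    simp only [aStar, θ]
    linear_combination (-γ) * hid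
  rw [hE]
  have hBle : δ * (1 - Real.cos (2 * Real.pi * (s : ℝ) / N)) ≤ 0 :=
    mul_nonpos_of_nonpos_of_nonneg hδ.le (by linarith)
  have hAle : -(γ * (2 * S)) ≤ 0 := by nlinarith
  have hNk1 : ((N : ℤ) - 1) / 2 = (k : ℤ) := by omega
  have hNk2 : ((N : ℤ) + 1) / 2 = (k : ℤ) + 1 := by omega
  refine ⟨by linarith, ?_, ?_⟩
  · intro h0
    have hS0 : S = 0 := by nlinarith
    have hB0 : Real.cos (2 * Real.pi * (s : ℝ) / N) = 1 := by
      rw [hS0] at h0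
      have hmul : δ * (1 - Real.cos (2 * Real.pi * (s : ℝ) / N)) = 0 := by linarith
      rcases mul_eq_zero.mp hmul with h | h
      · exact absurd h hδ.ne
      · linarith
    refine ⟨Int.modEq_zero_iff_dvd.mpr ((aux_cos_one N hN s).mp hB0), ?_⟩
    rcases hSiff.mp hS0 with h | h
    · right
      rw [hNk2, Int.modEq_iff_dvd]
      simpa [hj, neg_sub] using (dvd_neg.mpr h)
    · left
      rw [hNk1, Int.modEq_iff_dvd]
      have : (k : ℤ) - r = -(j + 1) := by rw [hj]; ring
      rw [this]
      exact dvd_neg.mpr h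
  · rintro ⟨hs, hr⟩
    have hB0 : Real.cos (2 * Real.pi * (s : ℝ) / N) = 1 :=
      (aux_cos_one N hN s).mpr (Int.modEq_zero_iff_dvd.mp hs)
    have hS0 : S = 0 := by
      apply hSiff.mpr
      rcases hr with h | h
      · right
        rw [hNk1, Int.modEq_iff_dvd] at h
        have : j + 1 = -((k : ℤ) - r) := by rw [hj]; ring
        rw [this]
        exact dvd_neg.mpr h
      · left
        rw [hNk2, Int.modEq_iff_dvd] at h
        have : j = -(((k : ℤ) + 1) - r) := by rw [hj]; ring
        rw [this]
        exact dvd_neg.mpr h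
    rw [hS0, hB0]; ring
end
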